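/- arXiv:2409.19129 — 4 statements merged into one kernel-verified Lean document; each statement's English description precedes it below -/
import Mathlib

section
/- (Kirchhoff's matrix-tree theorem, weighted form) Let $L$ be the weighted Laplacian of a graph on $n$ vertices with symmetric nonnegative edge weights $f_{ij}$. Then $\det(L[1]) = \sum_{T \in \mathcal{T}_n} \prod_{(i,j)\in T} f_{ij}$, where $\mathcal{T}_n$ is the set of all spanning trees on $[n]$ and $L[1]$ is $L$ with its first row and column deleted. -/
open Matrix Finset

/-- The weighted-graph Laplacian on `Fin n` with edge weights `f`. -/
def lap {n : ℕ} (f : Fin n → Fin n → ℝ) : Matrix (Fin n) (Fin n) ℝ :=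
  Matrix.of fun s t =>
    if s = t then ∑ u ∈ Finset.univ.erase s, f s u else -(f s t)

namespace MTT

section incidence

variable {α : Type*} [LinearOrder α]

/-- smaller endpoint of an edge -/
def emin (e : Sym2 α) : α := Sym2.lift ⟨min, min_comm⟩ e

/-- larger endpoint of an edge -/
def emax (e : Sym2 α) : α := Sym2.lift ⟨max, max_comm⟩ e

@[simp] lemma emin_mk (a b : α) : emin s(a, b) = min a b := rfl

@[simp] lemma emax_mk (a b : α) : emax s(a, b) = max a b := rfl

lemma mk_emin_emax (e : Sym2 α) : s(emin e, emax e) = e := by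
  induction e using Sym2.ind with
  | _ a b =>
    rcases le_total a b with h | h
    · simp [min_eq_left h, max_eq_right h]
    · rw [emin_mk, emax_mk, min_eq_right h, max_eq_left h, Sym2.eq_swap]

lemma mem_iff_emin_emax {v : α} {e : Sym2 α} : v ∈ e ↔ v = emin e ∨ v = emax e := by
  conv_lhs => rw [← mk_emin_emax e]
  exact Sym2.mem_iff

lemma emin_ne_emax {e : Sym2 α} (h : ¬ e.IsDiag) : emin e ≠ emax e := by
  intro hc
  apply h
  rw [← mk_emin_emax e]
  exact Sym2.mk_isDiag_iff.mpr hc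

/-- signed incidence of vertex `v` in edge `e` -/
noncomputable def inc (v : α) (e : Sym2 α) : ℝ :=
  (if v = emin e then 1 else 0) - (if v = emax e then 1 else 0)

lemma inc_eq_zero_of_notMem {v : α} {e : Sym2 α} (h : v ∉ e) : inc v e = 0 := by
  rw [mem_iff_emin_emax] at h
  push_neg at h
  simp [inc, h.1, h.2]

lemma inc_sq {v : α} {e : Sym2 α} (hm : v ∈ e) (hd : ¬ e.IsDiag) : inc v e * inc v e = 1 := by
  have hne := emin_ne_emax hd
  rcases mem_iff_emin_emax.mp hm with h | h <;> subst h <;> simp [inc, hne, hne.symm]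

lemma inc_mul_inc {a b : α} (h : a ≠ b) : inc a s(a, b) * inc b s(a, b) = -1 := by
  rcases le_or_gt a b with hab | hab
  · have h1 : min a b = a := min_eq_left hab
    have h2 : max a b = b := max_eq_right hab
    simp [inc, h1, h2, h, h.symm]
  · have h1 : min a b = b := min_eq_right hab.le
    have h2 : max a b = a := max_eq_left hab.le
    simp [inc, h1, h2, h, h.symm]

lemma eq_mk_of_mem_mem {a b : α} {e : Sym2 α} (hab : a ≠ b) (ha : a ∈ e) (hb : b ∈ e) :
    e = s(a, b) := by
  induction e using Sym2.ind with
  | _ x y =>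
    rw [Sym2.mem_iff] at ha hb
    rcases ha with rfl | rfl
    · rcases hb with rfl | rfl
      · exact absurd rfl hab
      · rfl
    · rcases hb with rfl | rfl
      · exact Sym2.eq_swap
      · exact absurd rfl hab

end incidence

noncomputable instance sym2LinearOrder {α : Type*} [LinearOrder α] :
    LinearOrder (Sym2 α) :=
  LinearOrder.lift' (fun e => toLex (emin e, emax e)) (by
    intro e₁ e₂ h
    have h' : (emin e₁, emax e₁) = (emin e₂, emax e₂) := toLex.injective h
    rw [Prod.mk.injEq] at h'
    rw [← mk_emin_emax e₁, ← mk_emin_emax e₂, h'.1, h'.2])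

section gram

variable {m : ℕ} {E : Type*} [Fintype E] [LinearOrder E]

noncomputable def sqdet (A : Matrix (Fin m) E ℝ) (S : Finset E) : ℝ :=
  if h : S.card = m then
    (Matrix.of fun i j : Fin m => A j ((S.orderIsoOfFin h i : E))).det ^ 2
  else 0

lemma det_gram (w : E → ℝ) (A : Matrix (Fin m) E ℝ) :
    (Matrix.of fun i j : Fin m => ∑ e : E, w e * (A i e * A j e)).det =
      ∑ S ∈ (Finset.univ : Finset E).powersetCard m, (∏ e ∈ S, w e) * sqdet A S := by
  classical
  have hrow : (Matrix.of fun i j : Fin m => ∑ e : E, w e * (A i e * A j e)) =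
      fun i => ∑ e : E, (w e * A i e) • (fun j => A j e) := by
    funext i j
    simp [Finset.sum_apply, mul_assoc]
  have h1 : (Matrix.of fun i j : Fin m => ∑ e : E, w e * (A i e * A j e)).det
      = ∑ r : Fin m → E, (∏ i, (w (r i) * A i (r i))) *
          (Matrix.of fun i j : Fin m => A j (r i)).det := by
    show Matrix.detRowAlternating _ = _
    rw [hrow]
    rw [show (Matrix.detRowAlternating fun i : Fin m => ∑ e : E, (w e * A i e) • fun j => A j e)
      = Matrix.detRowAlternating.toMultilinearMap
          (fun i : Fin m => ∑ e : E, (w e * A i e) • fun j => A j e) from rfl]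
    rw [Matrix.detRowAlternating.toMultilinearMap.map_sum
      (g := fun (i : Fin m) (e : E) => (w e * A i e) • (fun j => A j e))]
    refine Finset.sum_congr rfl fun r _ => ?_
    rw [show (Matrix.detRowAlternating.toMultilinearMap
        (fun i : Fin m => (w (r i) * A i (r i)) • (fun j => A j (r i))))
      = Matrix.detRowAlternating.toMultilinearMap
          (fun i : Fin m => (fun i' : Fin m => w (r i') * A i' (r i')) i • (fun j => A j (r i))) from rfl]
    rw [MultilinearMap.map_smul_univ]
    simp only [smul_eq_mul]
    rfl
  rw [h1]
  rw [← Finset.sum_filter_add_sum_filter_not Finset.univ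
    (fun r : Fin m → E => Function.Injective r)]
  have h2 : ∑ r ∈ Finset.univ.filter (fun r : Fin m → E => ¬ Function.Injective r),
      (∏ i, (w (r i) * A i (r i))) * (Matrix.of fun i j : Fin m => A j (r i)).det = 0 := by
    refine Finset.sum_eq_zero fun r hr => ?_
    simp only [Finset.mem_filter, Finset.mem_univ, true_and] at hr
    rw [Function.not_injective_iff] at hr
    obtain ⟨i, j, hij, hne⟩ := hr
    have hz : (Matrix.of fun i j : Fin m => A j (r i)).det = 0 :=
      Matrix.det_zero_of_row_eq hne (funext fun k => by simp [hij])
    rw [hz, mul_zero]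
  rw [h2, add_zero]
  have hmaps : ∀ r ∈ Finset.univ.filter (fun r : Fin m → E => Function.Injective r),
      Finset.image r Finset.univ ∈ (Finset.univ : Finset E).powersetCard m := by
    intro r hr
    simp only [Finset.mem_filter, Finset.mem_univ, true_and] at hr
    rw [Finset.mem_powersetCard]
    exact ⟨Finset.subset_univ _, by rw [Finset.card_image_of_injective _ hr, Finset.card_fin]⟩
  rw [← Finset.sum_fiberwise_of_maps_to hmaps]
  refine Finset.sum_congr rfl fun S hS => ?_
  have hcard : S.card = m := (Finset.mem_powersetCard.mp hS).2
  set iso := S.orderIsoOfFin hcard with hiso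
  set eS : Fin m → E := fun i => (iso i : E) with heS
  have heSmem : ∀ i, eS i ∈ S := fun i => (iso i).2
  have heSinj : Function.Injective eS :=
    fun a b h => iso.injective (Subtype.ext h)
  -- inner sum: reindex by permutations
  have h3 : ∑ r ∈ (Finset.univ.filter (fun r : Fin m → E => Function.Injective r)).filter
        (fun r => Finset.image r Finset.univ = S),
      (∏ i, (w (r i) * A i (r i))) * (Matrix.of fun i j : Fin m => A j (r i)).det
    = ∑ σ : Equiv.Perm (Fin m),
      (∏ i, (w (eS (σ i)) * A i (eS (σ i)))) *
        (Matrix.of fun i j : Fin m => A j (eS (σ i))).det := by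
    refine (Finset.sum_bij' (i := fun (σ : Equiv.Perm (Fin m)) (_ : σ ∈ Finset.univ) => fun k => eS (σ k))
      (j := fun r hr => ?_) ?_ ?_ ?_ ?_ ?_).symm
    · -- construct the permutation from r
      simp only [Finset.mem_filter, Finset.mem_univ, true_and] at hr
      have hb : Function.Bijective (fun k : Fin m => (⟨r k, by
          rw [← hr.2]; exact Finset.mem_image_of_mem r (Finset.mem_univ k)⟩ : {x // x ∈ S})) := by
        rw [Fintype.bijective_iff_injective_and_card]
        constructor
        · intro a b hab
          exact hr.1 (congrArg Subtype.val hab)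
        · rw [Fintype.card_coe, hcard, Fintype.card_fin]
      exact (Equiv.ofBijective _ hb).trans iso.toEquiv.symm
    · -- i maps into filtered set
      intro σ _
      simp only [Finset.mem_filter, Finset.mem_univ, true_and]
      have hinj : Function.Injective (fun k => eS (σ k)) :=
        fun a b h => σ.injective (heSinj h)
      refine ⟨hinj, ?_⟩
      apply Finset.eq_of_subset_of_card_le
      · intro x hx
        rw [Finset.mem_image] at hx
        obtain ⟨k, _, rfl⟩ := hx
        exact heSmem _
      · rw [hcard, Finset.card_image_of_injective _ hinj, Finset.card_fin]
    · intro r hr; exact Finset.mem_univ _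
    · -- left inverse: j (i σ) = σ
      intro σ _
      apply Equiv.ext
      intro k
      rw [Equiv.trans_apply, Equiv.symm_apply_eq]
      exact Subtype.ext rfl
    · -- right inverse: i (j r) = r
      intro r hr
      funext k
      simp only [heS]
      rw [Equiv.trans_apply]
      simp
    · -- values agree
      intro σ _
      rfl
  rw [h3]
  -- now compute the sum over permutations
  have hC : ∀ σ : Equiv.Perm (Fin m),
      (Matrix.of fun i j : Fin m => A j (eS (σ i))).det
        = (Equiv.Perm.sign σ : ℤ) * (Matrix.of fun i j : Fin m => A j (eS i)).det := by
    intro σ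
    have : (Matrix.of fun i j : Fin m => A j (eS (σ i)))
        = (Matrix.of fun i j : Fin m => A j (eS i)).submatrix σ id := rfl
    rw [this, Matrix.det_permute]
  have hw : ∀ σ : Equiv.Perm (Fin m), (∏ i, w (eS (σ i))) = ∏ e ∈ S, w e := by
    intro σ
    rw [Equiv.prod_comp σ (fun i => w (eS i)), ← Finset.prod_coe_sort S w]
    exact Equiv.prod_comp iso.toEquiv (fun x : {x // x ∈ S} => w ↑x)
  calc ∑ σ : Equiv.Perm (Fin m),
      (∏ i, (w (eS (σ i)) * A i (eS (σ i)))) *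
        (Matrix.of fun i j : Fin m => A j (eS (σ i))).det
      = (∏ e ∈ S, w e) * ((∑ σ : Equiv.Perm (Fin m),
          ((Equiv.Perm.sign σ : ℤ) : ℝ) * ∏ i, (Matrix.of fun i j : Fin m => A j (eS i)) (σ i) i) *
            (Matrix.of fun i j : Fin m => A j (eS i)).det) := by
        rw [Finset.sum_mul, Finset.mul_sum]
        refine Finset.sum_congr rfl fun σ _ => ?_
        rw [Finset.prod_mul_distrib, hw σ, hC σ]
        have : ∀ i, A i (eS (σ i)) = (Matrix.of fun i j : Fin m => A j (eS i)) (σ i) i := fun i => rfl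
        simp only [this]
        push_cast
        ring
    _ = (∏ e ∈ S, w e) * sqdet A S := by
        rw [← Matrix.det_apply']
        rw [sqdet, dif_pos hcard]
        ring

end gram

/-- determinant of a triangular matrix w.r.t. an injective key -/
lemma det_triangular_inj {m' : Type*} [DecidableEq m'] [Fintype m'] {α : Type*}
    [LinearOrder α] [DecidableEq α] {M : Matrix m' m' ℝ} {b : m' → α}
    (hb : Function.Injective b) (h : M.BlockTriangular b) : M.det = ∏ i, M i i := by
  rw [h.det]
  rw [Finset.prod_image (fun x _ y _ hxy => hb hxy)]
  refine Finset.prod_congr rfl fun i _ => ?_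
  have hu : ∀ x : {a // b a = b i}, x = ⟨i, rfl⟩ := fun x => Subtype.ext (hb x.2)
  haveI : Unique {a // b a = b i} := ⟨⟨⟨i, rfl⟩⟩, hu⟩
  rw [Matrix.det_unique]
  have hd : (default : {a // b a = b i}) = ⟨i, rfl⟩ := hu _
  rw [hd, Matrix.toSquareBlock_def]
  simp

section lapsum

variable {n : ℕ}

lemma lap_eq_sum (f : Fin (n+1) → Fin (n+1) → ℝ) (hsym : ∀ i j, f i j = f j i)
    (a b : Fin (n+1)) :
    lap f a b = ∑ e : {e : Sym2 (Fin (n+1)) // ¬ e.IsDiag},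
      Sym2.lift ⟨f, hsym⟩ e.val * (inc a e.val * inc b e.val) := by
  classical
  rcases eq_or_ne a b with rfl | hab
  · rw [show lap f a a = ∑ u ∈ Finset.univ.erase a, f a u from if_pos rfl]
    have hstep : ∀ e : {e : Sym2 (Fin (n+1)) // ¬ e.IsDiag},
        Sym2.lift ⟨f, hsym⟩ e.val * (inc a e.val * inc a e.val)
          = if a ∈ e.val then Sym2.lift ⟨f, hsym⟩ e.val else 0 := by
      intro e
      by_cases h : a ∈ e.val
      · rw [inc_sq h e.2, if_pos h, mul_one]
      · rw [inc_eq_zero_of_notMem h, if_neg h, mul_zero, mul_zero]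
    simp only [hstep]
    rw [← Finset.sum_filter]
    refine Finset.sum_bij' (i := fun (u : Fin (n+1)) (hu : u ∈ Finset.univ.erase a) =>
        (⟨s(a, u), by
          rw [Sym2.mk_isDiag_iff]
          exact fun h => (Finset.mem_erase.mp hu).1 h.symm⟩ :
            {e : Sym2 (Fin (n+1)) // ¬ e.IsDiag}))
      (j := fun e he => if a = emin e.val then emax e.val else emin e.val) ?_ ?_ ?_ ?_ ?_
    · intro u hu
      simp only [Finset.mem_filter, Finset.mem_univ, true_and]
      exact Sym2.mem_mk_left a u
    · intro e he
      beta_reduce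
      rw [Finset.mem_erase]
      refine ⟨?_, Finset.mem_univ _⟩
      by_cases h : a = emin e.val
      · rw [if_pos h]
        intro hc
        exact emin_ne_emax e.2 (h.symm.trans hc.symm)
      · rw [if_neg h]
        intro hc
        exact h hc.symm
    · intro u hu
      beta_reduce
      have hne : u ≠ a := (Finset.mem_erase.mp hu).1
      rcases le_or_gt a u with h | h
      · rw [if_pos (by rw [emin_mk, min_eq_left h]), emax_mk, max_eq_right h]
      · rw [if_neg (by rw [emin_mk, min_eq_right h.le]; exact fun hc => hne hc.symm),
          emin_mk, min_eq_right h.le]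
    · intro e he
      beta_reduce
      simp only [Finset.mem_filter, Finset.mem_univ, true_and] at he
      apply Subtype.ext
      show s(a, if a = emin e.val then emax e.val else emin e.val) = e.val
      by_cases h : a = emin e.val
      · rw [if_pos h]
        conv_rhs => rw [← mk_emin_emax e.val]
        rw [← h]
      · rw [if_neg h]
        rcases mem_iff_emin_emax.mp he with hc | hc
        · exact absurd hc h
        · conv_rhs => rw [← mk_emin_emax e.val]
          rw [← hc, Sym2.eq_swap]
    · intro u hu
      beta_reduce
      rw [Sym2.lift_mk]
  · rw [show lap f a b = -(f a b) from if_neg hab]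
    rw [Finset.sum_eq_single (⟨s(a, b), by rwa [Sym2.mk_isDiag_iff]⟩ :
        {e : Sym2 (Fin (n+1)) // ¬ e.IsDiag})]
    · rw [Sym2.lift_mk, inc_mul_inc hab]
      ring
    · intro e _ hne
      by_cases ha : a ∈ e.val
      · by_cases hb : b ∈ e.val
        · exact absurd (Subtype.ext (eq_mk_of_mem_mem hab ha hb)) hne
        · rw [inc_eq_zero_of_notMem hb, mul_zero, mul_zero]
      · rw [inc_eq_zero_of_notMem ha, zero_mul, mul_zero]
    · intro h
      exact absurd (Finset.mem_univ _) h

end lapsum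

section eval

variable {n : ℕ}

/-- reduced incidence matrix -/
noncomputable def incmat (n : ℕ) : Matrix (Fin n) {e : Sym2 (Fin (n+1)) // ¬ e.IsDiag} ℝ :=
  Matrix.of fun i e => inc (Fin.succ i) e.val

@[simp] lemma incmat_apply (i : Fin n) (e : {e : Sym2 (Fin (n+1)) // ¬ e.IsDiag}) :
    incmat n i e = inc (Fin.succ i) e.val := rfl

/-- the underlying finset of plain edges -/
noncomputable def edgeFinset (S : Finset {e : Sym2 (Fin (n+1)) // ¬ e.IsDiag}) :
    Finset (Sym2 (Fin (n+1))) :=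
  S.map ⟨Subtype.val, Subtype.val_injective⟩

lemma mem_edgeFinset {S : Finset {e : Sym2 (Fin (n+1)) // ¬ e.IsDiag}}
    {x : Sym2 (Fin (n+1))} :
    x ∈ edgeFinset S ↔ ∃ a ∈ S, (a : Sym2 (Fin (n+1))) = x := by
  rw [edgeFinset, Finset.mem_map]
  rfl

lemma card_edgeFinset (S : Finset {e : Sym2 (Fin (n+1)) // ¬ e.IsDiag}) :
    (edgeFinset S).card = S.card := by
  rw [edgeFinset, Finset.card_map]

lemma eval_zero (S : Finset {e : Sym2 (Fin (n+1)) // ¬ e.IsDiag}) (hS : S.card = n)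
    (hnc : ¬ (SimpleGraph.fromEdgeSet
      ((edgeFinset S : Finset (Sym2 (Fin (n+1)))) : Set (Sym2 (Fin (n+1))))).Connected) :
    sqdet (incmat n) S = 0 := by
  classical
  set G := SimpleGraph.fromEdgeSet
    ((edgeFinset S : Finset (Sym2 (Fin (n+1)))) : Set (Sym2 (Fin (n+1)))) with hG
  have hv : ∃ v, ¬ G.Reachable 0 v := by
    by_contra h
    push_neg at h
    apply hnc
    rw [SimpleGraph.connected_iff]
    exact ⟨fun u v => (h u).symm.trans (h v), ⟨0⟩⟩
  obtain ⟨v, hv⟩ := hv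
  have hv0 : v ≠ 0 := fun h => hv (by rw [h])
  rw [sqdet, dif_pos hS]
  have hdet : (Matrix.of fun i j : Fin n =>
      incmat n j ((S.orderIsoOfFin hS i : {e : Sym2 (Fin (n+1)) // ¬ e.IsDiag}))).det = 0 := by
    rw [← Matrix.exists_mulVec_eq_zero_iff]
    set x' : Fin (n+1) → ℝ := fun u => if G.Reachable v u then 1 else 0 with hx'
    have h0 : x' 0 = 0 := if_neg (fun h => hv h.symm)
    refine ⟨fun j => x' (Fin.succ j), ?_, ?_⟩
    · intro hx
      have hc := congrFun hx (v.pred hv0)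
      rw [Fin.succ_pred] at hc
      simp only [Pi.zero_apply] at hc
      have hone : x' v = 1 := if_pos (SimpleGraph.Reachable.refl v)
      rw [hone] at hc
      exact one_ne_zero hc
    · funext i
      set e : {e : Sym2 (Fin (n+1)) // ¬ e.IsDiag} :=
        ((S.orderIsoOfFin hS i : {x // x ∈ S}) : {e : Sym2 (Fin (n+1)) // ¬ e.IsDiag}) with he
      have hmemS : e ∈ S := (S.orderIsoOfFin hS i).2
      have hadj : G.Adj (emin e.val) (emax e.val) := by
        rw [hG, SimpleGraph.fromEdgeSet_adj, mk_emin_emax]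
        refine ⟨?_, emin_ne_emax e.2⟩
        rw [Finset.mem_coe, edgeFinset, Finset.mem_map]
        exact ⟨e, hmemS, rfl⟩
      have hreach : x' (emin e.val) = x' (emax e.val) := by
        have hiff : G.Reachable v (emin e.val) ↔ G.Reachable v (emax e.val) :=
          ⟨fun h => h.trans hadj.reachable, fun h => h.trans hadj.symm.reachable⟩
        simp only [hx']
        exact if_congr hiff rfl rfl
      show ∑ j : Fin n, inc (Fin.succ j) e.val * x' (Fin.succ j) = 0
      have step1 : ∑ j : Fin n, inc (Fin.succ j) e.val * x' (Fin.succ j)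
          = ∑ u : Fin (n+1), inc u e.val * x' u := by
        rw [Fin.sum_univ_succ (f := fun u => inc u e.val * x' u), h0, mul_zero, zero_add]
      rw [step1]
      have step2 : ∑ u : Fin (n+1), inc u e.val * x' u
          = x' (emin e.val) - x' (emax e.val) := by
        simp only [inc, sub_mul, one_mul, zero_mul, ite_mul]
        rw [Finset.sum_sub_distrib]
        rw [Finset.sum_ite_eq' Finset.univ (emin e.val) x',
          Finset.sum_ite_eq' Finset.univ (emax e.val) x']
        simp
      rw [step2, hreach, sub_self]
  rw [hdet]
  norm_num

lemma eval_one (S : Finset {e : Sym2 (Fin (n+1)) // ¬ e.IsDiag}) (hS : S.card = n)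
    (hc : (SimpleGraph.fromEdgeSet
      ((edgeFinset S : Finset (Sym2 (Fin (n+1)))) : Set (Sym2 (Fin (n+1))))).Connected) :
    sqdet (incmat n) S = 1 := by
  classical
  set G := SimpleGraph.fromEdgeSet
    ((edgeFinset S : Finset (Sym2 (Fin (n+1)))) : Set (Sym2 (Fin (n+1)))) with hG
  -- every nonzero vertex has a parent strictly closer to the root
  have hpar : ∀ v : Fin (n+1), v ≠ 0 → ∃ u, G.Adj u v ∧ G.dist 0 u + 1 = G.dist 0 v := by
    intro v hv
    obtain ⟨p, hp⟩ := (hc.preconnected 0 v).exists_walk_length_eq_dist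
    obtain ⟨u, hadj, q, hq⟩ := SimpleGraph.Walk.exists_eq_cons_of_ne hv p.reverse
    have hlen : q.length + 1 = G.dist 0 v := by
      have h' : p.reverse.length = G.dist 0 v := by
        rw [SimpleGraph.Walk.length_reverse, hp]
      rw [hq, SimpleGraph.Walk.length_cons] at h'
      exact h'
    have h1 : G.dist 0 u ≤ q.length := by
      have := SimpleGraph.dist_le q.reverse
      rwa [SimpleGraph.Walk.length_reverse] at this
    have h2 : G.dist 0 v ≤ G.dist 0 u + 1 := by
      obtain ⟨w0, hw0⟩ := (hc.preconnected 0 u).exists_walk_length_eq_dist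
      have := SimpleGraph.dist_le (w0.append hadj.symm.toWalk)
      rwa [SimpleGraph.Walk.length_append, hw0] at this
    exact ⟨u, hadj.symm, by omega⟩
  have hpar' : ∀ v : {v : Fin (n+1) // v ≠ 0},
      ∃ u, G.Adj u v.1 ∧ G.dist 0 u + 1 = G.dist 0 v.1 := fun v => hpar v.1 v.2
  choose par hadj hdist using hpar'
  have hnd : ∀ v : {v : Fin (n+1) // v ≠ 0}, ¬ (s(par v, v.1)).IsDiag := by
    intro v h
    exact (hadj v).ne (Sym2.mk_isDiag_iff.mp h)
  have hmem : ∀ v : {v : Fin (n+1) // v ≠ 0},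
      (⟨s(par v, v.1), hnd v⟩ : {e : Sym2 (Fin (n+1)) // ¬ e.IsDiag}) ∈ S := by
    intro v
    have h := hadj v
    rw [hG, SimpleGraph.fromEdgeSet_adj] at h
    have h1 := Finset.mem_coe.mp h.1
    rw [edgeFinset, Finset.mem_map] at h1
    obtain ⟨a, haS, ha⟩ := h1
    have : (⟨s(par v, v.1), hnd v⟩ : {e : Sym2 (Fin (n+1)) // ¬ e.IsDiag}) = a :=
      Subtype.ext ha.symm
    rw [this]
    exact haS
  set ψ : {v : Fin (n+1) // v ≠ 0} → {x // x ∈ S} :=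
    fun v => ⟨⟨s(par v, v.1), hnd v⟩, hmem v⟩ with hψ
  have hψinj : Function.Injective ψ := by
    intro v w h
    have h' : s(par v, v.1) = s(par w, w.1) := congrArg (fun x => x.1.1) h
    rw [Sym2.eq_iff] at h'
    rcases h' with ⟨h1, h2⟩ | ⟨h1, h2⟩
    · exact Subtype.ext h2
    · have d1 := hdist v
      have d2 := hdist w
      rw [h1] at d1
      rw [← h2] at d2
      omega
  have hcard1 : Fintype.card {v : Fin (n+1) // v ≠ 0} = n := by
    have h1 : Fintype.card {v : Fin (n+1) // ¬ (v = 0)}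
        = Fintype.card (Fin (n+1)) - Fintype.card {v : Fin (n+1) // v = 0} :=
      Fintype.card_subtype_compl _
    rw [Fintype.card_subtype_eq, Fintype.card_fin] at h1
    simpa using h1
  have hψbij : Function.Bijective ψ :=
    (Fintype.bijective_iff_injective_and_card ψ).mpr
      ⟨hψinj, by rw [hcard1, Fintype.card_coe, hS]⟩
  set ev : Fin n → {v : Fin (n+1) // v ≠ 0} :=
    fun i => ⟨Fin.succ i, Fin.succ_ne_zero i⟩ with hev
  have hevbij : Function.Bijective ev :=
    (Fintype.bijective_iff_injective_and_card ev).mpr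
      ⟨fun a b h => Fin.succ_injective n (congrArg Subtype.val h),
        by rw [Fintype.card_fin, hcard1]⟩
  rw [sqdet, dif_pos hS]
  set iso := S.orderIsoOfFin hS with hiso
  set C : Matrix (Fin n) (Fin n) ℝ :=
    Matrix.of fun i j : Fin n =>
      incmat n j ((iso i : {e : Sym2 (Fin (n+1)) // ¬ e.IsDiag})) with hCdef
  show C.det ^ 2 = 1
  set g : Equiv.Perm (Fin n) :=
    ((Equiv.ofBijective ev hevbij).trans (Equiv.ofBijective ψ hψbij)).trans
      iso.toEquiv.symm with hg
  set D : Matrix (Fin n) (Fin n) ℝ := C.submatrix (⇑g) id with hD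
  have hDdet : D.det = ((Equiv.Perm.sign g : ℤ) : ℝ) * C.det := Matrix.det_permute g C
  have hiso_g : ∀ k, (iso (g k) : {x // x ∈ S}) = ψ (ev k) := by
    intro k
    rw [hg]
    simp only [Equiv.trans_apply, Equiv.ofBijective_apply]
    exact iso.toEquiv.apply_symm_apply _
  have hDval : ∀ k j, D k j = inc (Fin.succ j) s(par (ev k), (ev k).1) := by
    intro k j
    show C (g k) j = _
    rw [hCdef]
    show incmat n j ((iso (g k) : {x // x ∈ S}) : {e : Sym2 (Fin (n+1)) // ¬ e.IsDiag}) = _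
    rw [hiso_g k]
    rfl
  set b : Fin n → Lex (ℕ × ℕ) := fun k => toLex (G.dist 0 (Fin.succ k), (k : ℕ)) with hb
  have hbinj : Function.Injective b := by
    intro a c h
    apply Fin.ext
    have := congrArg (fun x => (ofLex x).2) h
    exact this
  have htri : D.transpose.BlockTriangular b := by
    intro i j hji
    show D j i = 0
    by_contra hne
    rw [hDval] at hne
    have hmem' : Fin.succ i ∈ s(par (ev j), (ev j).1) := by
      by_contra hmem2
      exact hne (inc_eq_zero_of_notMem hmem2)
    rw [Sym2.mem_iff] at hmem'
    rcases hmem' with h1 | h1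
    · have hd := hdist (ev j)
      rw [← h1] at hd
      have hev1 : ((ev j) : Fin (n+1)) = Fin.succ j := rfl
      rw [hev1] at hd
      have hlt : G.dist 0 (Fin.succ i) < G.dist 0 (Fin.succ j) := by omega
      have : b i < b j := by
        rw [hb]
        rw [Prod.Lex.lt_iff]
        exact Or.inl hlt
      exact absurd hji (lt_asymm this)
    · have hev1 : ((ev j) : Fin (n+1)) = Fin.succ j := rfl
      rw [hev1] at h1
      have : i = j := Fin.succ_injective n h1
      rw [this] at hji
      exact lt_irrefl _ hji
  have hDt : D.transpose.det = ∏ k, D.transpose k k := det_triangular_inj hbinj htri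
  have hDdet2 : D.det = ∏ k, D k k := by
    rw [← Matrix.det_transpose, hDt]
    rfl
  have hdiag : ∀ k : Fin n, D k k * D k k = 1 := by
    intro k
    rw [hDval]
    exact inc_sq (Sym2.mem_mk_right _ _) (hnd (ev k))
  have hs2 : ((Equiv.Perm.sign g : ℤ) : ℝ) ^ 2 = 1 := by
    rcases Int.units_eq_one_or (Equiv.Perm.sign g) with h | h <;> rw [h] <;> norm_num
  have hCD : C.det ^ 2 = D.det ^ 2 := by
    rw [hDdet, mul_pow, hs2, one_mul]
  rw [hCD, hDdet2, ← Finset.prod_pow]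
  rw [Finset.prod_congr rfl fun k _ => (by rw [pow_two]; exact hdiag k :
    D k k ^ 2 = 1)]
  exact Finset.prod_const_one

end eval

end MTT

open Classical in
/-- weighted Kirchhoff matrix-tree theorem: the determinant of the
Laplacian with its first row and column deleted equals the sum, over all spanning
trees `T` on the `n+1` vertices (sets of `n` non-loop edges whose graph is connected),
of the product of the edge weights of `T`. -/
theorem kirchhoff_matrix_tree {n : ℕ} (f : Fin (n + 1) → Fin (n + 1) → ℝ)
    (hsym : ∀ i j, f i j = f j i) (hnn : ∀ i j, 0 ≤ f i j) :
    ((lap f).submatrix Fin.succ Fin.succ).det =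
      ∑ T ∈ Finset.univ.filter
          (fun T : Finset (Sym2 (Fin (n + 1))) =>
            (∀ e ∈ T, ¬ e.IsDiag) ∧ T.card = n ∧
              (SimpleGraph.fromEdgeSet (↑T : Set (Sym2 (Fin (n + 1))))).Connected),
        ∏ e ∈ T, Sym2.lift ⟨f, hsym⟩ e := by
  classical
  have hL : (lap f).submatrix Fin.succ Fin.succ =
      Matrix.of fun i j : Fin n => ∑ e : {e : Sym2 (Fin (n+1)) // ¬ e.IsDiag},
        Sym2.lift ⟨f, hsym⟩ e.val * (MTT.incmat n i e * MTT.incmat n j e) := by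
    ext i j
    exact MTT.lap_eq_sum f hsym (Fin.succ i) (Fin.succ j)
  rw [hL, MTT.det_gram]
  have hterm : ∀ S ∈ (Finset.univ :
        Finset {e : Sym2 (Fin (n+1)) // ¬ e.IsDiag}).powersetCard n,
      (∏ e ∈ S, Sym2.lift ⟨f, hsym⟩ e.val) * MTT.sqdet (MTT.incmat n) S
      = if (SimpleGraph.fromEdgeSet
            ((MTT.edgeFinset S : Finset (Sym2 (Fin (n+1)))) :
              Set (Sym2 (Fin (n+1))))).Connected
          then ∏ e ∈ S, Sym2.lift ⟨f, hsym⟩ e.val else 0 := by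
    intro S hS
    have hcard := (Finset.mem_powersetCard.mp hS).2
    by_cases hconn : (SimpleGraph.fromEdgeSet
        ((MTT.edgeFinset S : Finset (Sym2 (Fin (n+1)))) :
          Set (Sym2 (Fin (n+1))))).Connected
    · rw [MTT.eval_one S hcard hconn, mul_one, if_pos hconn]
    · rw [MTT.eval_zero S hcard hconn, mul_zero, if_neg hconn]
  rw [Finset.sum_congr rfl hterm, ← Finset.sum_filter]
  have hmap : ∀ T : Finset (Sym2 (Fin (n+1))), (∀ e ∈ T, ¬ e.IsDiag) →
      MTT.edgeFinset (T.subtype (fun e => ¬ e.IsDiag)) = T := by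
    intro T hT
    ext x
    rw [MTT.edgeFinset, Finset.mem_map]
    constructor
    · rintro ⟨a, ha, rfl⟩
      exact Finset.mem_subtype.mp ha
    · intro hx
      exact ⟨⟨x, hT x hx⟩, Finset.mem_subtype.mpr hx, rfl⟩
  refine Finset.sum_bij' (i := fun S _ => MTT.edgeFinset S)
    (j := fun T _ => T.subtype (fun e => ¬ e.IsDiag)) ?_ ?_ ?_ ?_ ?_
  · intro S hS
    rw [Finset.mem_filter] at hS ⊢
    obtain ⟨hpc, hconn⟩ := hS
    have hcard := (Finset.mem_powersetCard.mp hpc).2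
    refine ⟨Finset.mem_univ _, ?_, ?_, hconn⟩
    · intro e he
      obtain ⟨a, _, rfl⟩ := MTT.mem_edgeFinset.mp he
      exact a.2
    · rw [MTT.card_edgeFinset, hcard]
  · intro T hT
    rw [Finset.mem_filter] at hT
    obtain ⟨_, hnd, hcard, hconn⟩ := hT
    have hm := hmap T hnd
    rw [Finset.mem_filter, Finset.mem_powersetCard]
    have hcard' : (T.subtype (fun e => ¬ e.IsDiag)).card = n := by
      have := congrArg Finset.card hm
      rw [MTT.card_edgeFinset] at this
      rw [this, hcard]
    refine ⟨⟨Finset.subset_univ _, hcard'⟩, ?_⟩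
    rw [hm]
    exact hconn
  · intro S hS
    apply Finset.map_injective (⟨Subtype.val, Subtype.val_injective⟩ :
      {e : Sym2 (Fin (n+1)) // ¬ e.IsDiag} ↪ Sym2 (Fin (n+1)))
    have hnd : ∀ e ∈ MTT.edgeFinset S, ¬ e.IsDiag := by
      intro e he
      obtain ⟨a, _, rfl⟩ := MTT.mem_edgeFinset.mp he
      exact a.2
    exact hmap (MTT.edgeFinset S) hnd
  · intro T hT
    rw [Finset.mem_filter] at hT
    exact hmap T hT.2.1
  · intro S hS
    exact (Finset.prod_map S (⟨Subtype.val, Subtype.val_injective⟩ :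
      {e : Sym2 (Fin (n+1)) // ¬ e.IsDiag} ↪ Sym2 (Fin (n+1)))
      (Sym2.lift ⟨f, hsym⟩)).symm
end

section
/- Let $T_K^\gamma$ be the Laplacian on $K$ nodes with edge weights $\tau^\gamma_{st} = n_s n_t \gamma$ for $s \ne t$, where $n_1 + \cdots + n_K = n$, all $n_i \ge 1$, and $\gamma > 0$. Then $\det(T_K^\gamma[K]) = \gamma^{K-1} n^{K-2} \prod_{i=1}^K n_i$, where $T_K^\gamma[K]$ denotes the matrix with the last row and column removed. -/
open Matrix Finset

/-! With weights `c s * c t * γ` the Laplacian is `γ • (n • diagonal c - c cᵀ)`, and deleting a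
row and the matching column keeps this shape, with `c` replaced by its restriction `c'` to the
first `K - 1` nodes. Factoring out `diagonal c'` leaves `n • 1 - 1 c'ᵀ`, whose determinant is the
characteristic polynomial of the rank-one matrix `1 c'ᵀ` at `n`, namely
`n ^ (K - 1) - (∑ c') * n ^ (K - 2) = n ^ (K - 2) * c_K`. -/

namespace Matrix

variable {n R : Type*} [Fintype n] [DecidableEq n] [CommRing R]

theorem det_scalar_sub_vecMulVec (t : R) (u v : n → R) :
    (scalar n t - vecMulVec u v).det
      = t ^ Fintype.card n - (u ⬝ᵥ v) * t ^ (Fintype.card n - 1) := by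
  rw [← eval_charpoly, charpoly_vecMulVec]
  simp

theorem diagonal_mul_sub_vecMulVec_self_eq_diagonal_mul (t : R) (a : n → R) :
    diagonal (fun i => t * a i) - vecMulVec a a = diagonal a * (scalar n t - vecMulVec 1 a) := by
  ext i j
  by_cases h : i = j
  · subst h
    simp only [sub_apply, diagonal_apply_eq, vecMulVec_apply, scalar_apply, one_vecMulVec,
      diagonal_mul, replicateRow_apply]
    ring
  · simp [diagonal_mul, vecMulVec_apply, h]

theorem det_diagonal_mul_sub_vecMulVec_self (t : R) (a : n → R) :
    (diagonal (fun i => t * a i) - vecMulVec a a).det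
      = (t ^ Fintype.card n - (∑ i, a i) * t ^ (Fintype.card n - 1)) * ∏ i, a i := by
  rw [diagonal_mul_sub_vecMulVec_self_eq_diagonal_mul, det_mul, det_diagonal,
    det_scalar_sub_vecMulVec, one_dotProduct, mul_comm]

end Matrix

theorem lap_eq_smul_diagonal_sub_vecMulVec {n : ℕ} (w : Fin n → ℝ) (γ : ℝ) :
    lap (fun s t => w s * w t * γ)
      = γ • (diagonal (fun s => (∑ u, w u) * w s) - vecMulVec w w) := by
  ext s t
  by_cases h : s = t
  · subst h
    simp only [lap, ← sum_mul, ← mul_sum, mem_univ, sum_erase_eq_sub, of_apply, ↓reduceIte,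
      Matrix.smul_apply, Matrix.sub_apply, diagonal_apply_eq, vecMulVec_apply, smul_eq_mul]
    ring
  · simp [lap, vecMulVec_apply, h]
    ring

theorem lap_submatrix_eq_smul_diagonal_sub_vecMulVec {n k : ℕ} (w : Fin n → ℝ) (γ : ℝ)
    {e : Fin k → Fin n} (he : Function.Injective e) :
    (lap fun s t => w s * w t * γ).submatrix e e
      = γ • (diagonal (fun i => (∑ u, w u) * (w ∘ e) i) - vecMulVec (w ∘ e) (w ∘ e)) := by
  ext i j
  simp [lap_eq_smul_diagonal_sub_vecMulVec, diagonal_apply, he.eq_iff, vecMulVec_apply]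

theorem det_supernode_laplacian_minor_general {m : ℕ} (γ : ℝ)
    (c : Fin (m + 2) → ℕ) :
    ((lap fun s t : Fin (m + 2) => (c s : ℝ) * (c t : ℝ) * γ).submatrix
        Fin.castSucc Fin.castSucc).det
      = γ ^ (m + 1) * ((∑ i, c i : ℕ) : ℝ) ^ m * ∏ i, (c i : ℝ) := by
  rw [lap_submatrix_eq_smul_diagonal_sub_vecMulVec _ _ (Fin.castSucc_injective _), det_smul,
    det_diagonal_mul_sub_vecMulVec_self, Nat.cast_sum]
  simp only [Fintype.card_fin, Nat.add_sub_cancel, Function.comp_apply,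
    Fin.sum_univ_castSucc (fun i => (c i : ℝ)), Fin.prod_univ_castSucc (fun i => (c i : ℝ))]
  ring

/-- for the Laplacian `T` on `K = m+2` nodes with edge weights
`τ s t = c s * c t * γ` (where `c i ≥ 1` and `n = ∑ c i`), deleting the last row and
column gives `det (T[K]) = γ^(K-1) * n^(K-2) * ∏ c i`. -/
theorem det_supernode_laplacian_minor {m : ℕ} (γ : ℝ) (hγ : 0 < γ)
    (c : Fin (m + 2) → ℕ) (hc : ∀ i, 1 ≤ c i) :
    ((lap fun s t : Fin (m + 2) => (c s : ℝ) * (c t : ℝ) * γ).submatrix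
        Fin.castSucc Fin.castSucc).det
      = γ ^ (m + 1) * ((∑ i, c i : ℕ) : ℝ) ^ m * ∏ i, (c i : ℝ) :=
  det_supernode_laplacian_minor_general γ c
end

section
/- Suppose $f_{st} \ge \gamma > 0$ for all $s, t \in [n]$, $s \ne t$, and let $(V_1,\ldots,V_K)$ be any partition of $[n]$ with $|V_i| = n_i$. Let $L_n$ be the Laplacian with weights $f_{st}$ on $[n]$ and $L_{V_i}$ the Laplacian of the induced subgraph on $V_i$. Then $\frac{\prod_{i=1}^K \det(L_{V_i} + n_i^{-1}J)}{\det(L_n + n^{-1}J)} \le (n\gamma)^{-(K-1)}$. -/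
open Matrix Finset

/-- The Laplacian of the induced weighted subgraph on a finset `S`. -/
def lapOn {n : ℕ} (f : Fin n → Fin n → ℝ) (S : Finset (Fin n)) :
    Matrix {x : Fin n // x ∈ S} {x : Fin n // x ∈ S} ℝ :=
  Matrix.of fun a b =>
    if (a : Fin n) = (b : Fin n) then ∑ u ∈ S.erase (a : Fin n), f a u
    else -(f a b)

/-- The all-ones matrix. -/
def Jmat (ι : Type*) : Matrix ι ι ℝ := Matrix.of fun _ _ => 1

/-!
Let `L_w` be the Laplacian of the edges inside the blocks, `P` the averaging over blocks and
`Q = n⁻¹ J`, so that `R = P - Q` is the orthogonal projection onto the block-constant vectors of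
sum zero, of rank `K - 1`. The numerator is `det (L_w + P)`, as `L_w + P` is block diagonal with
blocks `L_{V_k} + n_k⁻¹ J`. All weights between blocks are at least `γ`, so in the Loewner order
`L - L_w ≥ γ M ≥ n γ R`, where `M` is the Laplacian of the complete multipartite graph and
`M - n R` is the Laplacian of the weights `(n - n_k) / n_k` inside each block. Hence
`L + Q ≥ L_w + Q + n γ R = (L_w + P) (1 + (n γ - 1) R) ≥ 0`, whose determinant is
`(n γ)^(K - 1) det (L_w + P)`, and the determinant is monotone on positive semidefinite matrices.
-/

open scoped MatrixOrder

section LoewnerDet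

variable {ι : Type*} [Fintype ι] [DecidableEq ι]

lemma Matrix.PosSemidef.one_le_det_one_add {M : Matrix ι ι ℝ} (hM : M.PosSemidef) :
    1 ≤ (1 + M).det := by
  have hspec := hM.1.spectral_theorem
  rw [Unitary.conjStarAlgAut_apply] at hspec
  set U : Matrix ι ι ℝ := (hM.1.eigenvectorUnitary : Matrix ι ι ℝ)
  have hU : U * star U = 1 := Matrix.mem_unitaryGroup_iff.mp hM.1.eigenvectorUnitary.2
  have hdiag : 1 + M = U * diagonal (fun i => 1 + hM.1.eigenvalues i) * star U := by
    rw [← diagonal_add, diagonal_one, mul_add, add_mul, mul_one, hU]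
    exact congrArg (1 + ·) hspec
  rw [hdiag, det_mul_right_comm, hU, one_mul, det_diagonal]
  exact Finset.one_le_prod fun i _ => le_add_of_nonneg_right (hM.eigenvalues_nonneg i)

lemma Matrix.det_le_det {A C : Matrix ι ι ℝ} (hC : 0 ≤ C) (hCA : C ≤ A) :
    C.det ≤ A.det := by
  rw [nonneg_iff_posSemidef] at hC
  rw [Matrix.le_iff] at hCA
  by_cases hC0 : C.det = 0
  · rw [hC0]
    exact (by simpa using hC.add hCA : A.PosSemidef).det_nonneg
  set S := CFC.sqrt C
  have hSS : S * S = C := CFC.sqrt_mul_sqrt_self C hC.nonneg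
  have hS : S.IsHermitian := (CFC.sqrt_nonneg C).posSemidef.1
  have hSdet : IsUnit S.det :=
    isUnit_iff_ne_zero.mpr fun h => hC0 (by rw [← hSS, det_mul, h, zero_mul])
  have hM : (S⁻¹ * (A - C) * S⁻¹).PosSemidef := by
    have := hCA.mul_mul_conjTranspose_same S⁻¹
    rwa [conjTranspose_nonsing_inv, hS.eq] at this
  have hA : A = S * (1 + S⁻¹ * (A - C) * S⁻¹) * S := by
    simp only [mul_add, add_mul, mul_one, ← Matrix.mul_assoc, mul_nonsing_inv _ hSdet, one_mul]
    rw [Matrix.mul_assoc, nonsing_inv_mul _ hSdet, mul_one, hSS, add_sub_cancel]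
  calc C.det ≤ C.det * (1 + S⁻¹ * (A - C) * S⁻¹).det :=
        le_mul_of_one_le_right hC.det_nonneg hM.one_le_det_one_add
    _ = A.det := by
        conv_rhs => rw [hA]
        rw [det_mul, det_mul, ← hSS, det_mul]; ring

end LoewnerDet

lemma Jmat_nonneg (ι : Type*) [Fintype ι] : 0 ≤ Jmat ι := by
  have hJ : Jmat ι = vecMulVec 1 (star 1) := by
    ext s t
    simp [Jmat, vecMulVec_apply]
  exact nonneg_iff_posSemidef.mpr (hJ ▸ posSemidef_vecMulVec_self_star 1)

section Laplacian

variable {n : ℕ}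

lemma lap_sub (f g : Fin n → Fin n → ℝ) : lap (f - g) = lap f - lap g := by
  ext s t
  by_cases hst : s = t <;> simp [lap, hst, Finset.sum_sub_distrib, neg_add_eq_sub]

lemma lap_smul (c : ℝ) (f : Fin n → Fin n → ℝ) : lap (c • f) = c • lap f := by
  ext s t
  simp only [lap, of_apply, Matrix.smul_apply, Pi.smul_apply, smul_eq_mul]
  split_ifs
  · exact (Finset.mul_sum _ _ _).symm
  · exact (mul_neg _ _).symm

lemma lap_mulVec_apply (w : Fin n → Fin n → ℝ) (x : Fin n → ℝ) (s : Fin n) :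
    (lap w *ᵥ x) s = ∑ u ∈ univ.erase s, w s u * (x s - x u) := by
  rw [mulVec, dotProduct, ← Finset.add_sum_erase _ _ (mem_univ s)]
  simp only [lap, of_apply, if_true, mul_sub, Finset.sum_sub_distrib, Finset.sum_mul]
  rw [sub_eq_add_neg, ← Finset.sum_neg_distrib]
  congr 1
  refine Finset.sum_congr rfl fun u hu => ?_
  rw [if_neg (Finset.ne_of_mem_erase hu).symm, neg_mul, mul_comm]

lemma dotProduct_lap_mulVec {w : Fin n → Fin n → ℝ} (hw : ∀ s t, w s t = w t s)
    (x : Fin n → ℝ) :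
    x ⬝ᵥ lap w *ᵥ x = (∑ s, ∑ t, w s t * (x s - x t) ^ 2) / 2 := by
  have hswap : ∑ s, ∑ t, w s t * (x t * (x t - x s)) = ∑ s, ∑ t, w s t * (x s * (x s - x t)) := by
    rw [Finset.sum_comm]
    simp only [hw]
  have hsplit : ∑ s, ∑ t, w s t * (x s - x t) ^ 2
      = ∑ s, ∑ t, w s t * (x s * (x s - x t)) + ∑ s, ∑ t, w s t * (x t * (x t - x s)) := by
    simp only [← Finset.sum_add_distrib]
    exact Finset.sum_congr rfl fun s _ => Finset.sum_congr rfl fun t _ => by ring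
  rw [hsplit, hswap, dotProduct]
  simp only [lap_mulVec_apply, Finset.mul_sum]
  rw [add_self_div_two]
  refine Finset.sum_congr rfl fun s _ => Finset.sum_erase _ (by ring) |>.trans ?_
  exact Finset.sum_congr rfl fun t _ => by ring

lemma isHermitian_lap {w : Fin n → Fin n → ℝ} (hw : ∀ s t, w s t = w t s) :
    (lap w).IsHermitian := by
  ext s t
  by_cases hst : s = t
  · subst hst; rfl
  · simp [lap, hst, Ne.symm hst, hw]

lemma lap_nonneg {w : Fin n → Fin n → ℝ} (hw : ∀ s t, w s t = w t s)
    (hw₀ : ∀ s t, s ≠ t → 0 ≤ w s t) : 0 ≤ lap w := by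
  refine nonneg_iff_posSemidef.mpr <| .of_dotProduct_mulVec_nonneg (isHermitian_lap hw) fun x => ?_
  rw [star_trivial, dotProduct_lap_mulVec hw]
  refine div_nonneg (Finset.sum_nonneg fun s _ => Finset.sum_nonneg fun t _ => ?_) zero_le_two
  obtain rfl | hst := eq_or_ne s t
  · simp
  · exact mul_nonneg (hw₀ s t hst) (sq_nonneg _)

lemma lap_le_lap {f g : Fin n → Fin n → ℝ} (hf : ∀ s t, f s t = f t s)
    (hg : ∀ s t, g s t = g t s) (hgf : ∀ s t, s ≠ t → g s t ≤ f s t) : lap g ≤ lap f := by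
  rw [← sub_nonneg, ← lap_sub]
  exact lap_nonneg (fun s t => by simp [hf s t, hg s t]) fun s t hst => sub_nonneg.mpr (hgf s t hst)

end Laplacian

section Blocks

variable {ι κ : Type*} [DecidableEq κ] (blk : ι → κ)

lemma exists_eq_filter_of_partition [Fintype ι] {V : κ → Finset ι}
    (hdisj : ∀ k l, k ≠ l → Disjoint (V k) (V l)) (hcover : ∀ s, ∃ k, s ∈ V k) :
    ∃ blk : ι → κ, V = fun k => ({s | blk s = k} : Finset ι) := by
  choose blk hblk using hcover
  refine ⟨blk, funext fun k => Finset.ext fun s => ?_⟩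
  rw [Finset.mem_filter, and_iff_right (mem_univ s)]
  refine ⟨fun hs => ?_, fun h => h ▸ hblk s⟩
  by_contra h
  exact Finset.disjoint_left.mp (hdisj _ _ h) (hblk s) hs

def blockSize [Fintype ι] (k : κ) : ℝ := #{s | blk s = k}

def blockIndicator : Matrix ι κ ℝ := of fun s k => if blk s = k then 1 else 0

lemma blockIndicator_mul_mul_transpose [Fintype κ] (X : Matrix κ κ ℝ) :
    blockIndicator blk * X * (blockIndicator blk)ᵀ = X.submatrix blk blk := by
  ext s t
  simp [blockIndicator, mul_apply]

lemma transpose_blockIndicator_mul_self [Fintype ι] :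
    (blockIndicator blk)ᵀ * blockIndicator blk = diagonal (blockSize blk) := by
  ext k l
  by_cases hkl : k = l
  · subst hkl
    simp +contextual [blockIndicator, mul_apply, blockSize, Finset.sum_boole]
  · refine (Finset.sum_eq_zero fun s _ => ?_).trans (diagonal_apply_ne _ hkl).symm
    by_cases hs : blk s = k <;> simp [blockIndicator, hs, hkl]

lemma submatrix_mul_submatrix [Fintype ι] [Fintype κ] (X Y : Matrix κ κ ℝ) :
    X.submatrix blk blk * Y.submatrix blk blk
      = (X * diagonal (blockSize blk) * Y).submatrix blk blk := by
  simp only [← blockIndicator_mul_mul_transpose, Matrix.mul_assoc,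
    ← transpose_blockIndicator_mul_self]

lemma det_one_add_submatrix [Fintype ι] [Fintype κ] [DecidableEq ι] (X : Matrix κ κ ℝ) :
    (1 + X.submatrix blk blk).det = (1 + X * diagonal (blockSize blk)).det := by
  rw [← blockIndicator_mul_mul_transpose, Matrix.mul_assoc, det_one_add_mul_comm,
    Matrix.mul_assoc, transpose_blockIndicator_mul_self]

lemma sum_blockSize [Fintype ι] [Fintype κ] : ∑ k, blockSize blk k = Fintype.card ι := by
  simp only [blockSize]
  exact_mod_cast (Finset.card_eq_sum_card_fiberwise fun s _ => mem_univ (blk s)).symm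

lemma blockSize_pos [Fintype ι] {blk : ι → κ} (hblk : Function.Surjective blk) (k : κ) :
    0 < blockSize blk k := by
  obtain ⟨s, rfl⟩ := hblk k
  exact Nat.cast_pos.mpr (Finset.card_pos.mpr ⟨s, by simp⟩)

/-- Lifted along `blk`, this is `P - n⁻¹ J` with `n = card ι`, where `P` averages over blocks:
the orthogonal projection onto the block-constant vectors of sum zero. -/
noncomputable def blockCentering [Fintype ι] : Matrix κ κ ℝ :=
  diagonal (blockSize blk)⁻¹ - (Fintype.card ι : ℝ)⁻¹ • Jmat κ

variable {blk}

lemma blockCentering_mul_blockSize_mul_self [Fintype ι] [Nonempty ι] [Fintype κ]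
    (hblk : Function.Surjective blk) :
    blockCentering blk * diagonal (blockSize blk) * blockCentering blk = blockCentering blk := by
  have hn : (Fintype.card ι : ℝ) ≠ 0 := Nat.cast_ne_zero.mpr Fintype.card_ne_zero
  have hMD : blockCentering blk * diagonal (blockSize blk)
      = 1 - (Fintype.card ι : ℝ)⁻¹ • (Jmat κ * diagonal (blockSize blk)) := by
    rw [blockCentering, Matrix.sub_mul, diagonal_mul_diagonal, Matrix.smul_mul]
    simp_rw [Pi.inv_apply, inv_mul_cancel₀ (blockSize_pos hblk _).ne', diagonal_one]
  have hJDM : Jmat κ * diagonal (blockSize blk) * blockCentering blk = 0 := by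
    ext k l
    simp only [Jmat, blockCentering, mul_apply, of_apply, diagonal_apply, one_mul,
      Matrix.sub_apply, Matrix.smul_apply, Pi.inv_apply, smul_eq_mul, mul_one, Matrix.zero_apply,
      mul_sub, mul_ite, mul_zero, Finset.sum_sub_distrib, Finset.sum_ite_eq', Finset.mem_univ,
      if_true, ← Finset.sum_mul, sum_blockSize, mul_inv_cancel₀ (blockSize_pos hblk _).ne',
      mul_inv_cancel₀ hn, sub_self]
  rw [hMD, Matrix.sub_mul, Matrix.one_mul, Matrix.smul_mul, hJDM, smul_zero, sub_zero]

lemma posSemidef_blockCentering [Fintype ι] [Nonempty ι] [Fintype κ]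
    (hblk : Function.Surjective blk) : (blockCentering blk).PosSemidef := by
  have hsymm : (blockCentering blk)ᴴ = blockCentering blk := by
    ext k l
    by_cases hkl : k = l
    · subst hkl; simp [blockCentering, Jmat]
    · simp [blockCentering, Jmat, hkl, Ne.symm hkl]
  have h := (PosSemidef.diagonal fun k => (blockSize_pos hblk k).le).conjTranspose_mul_mul_same
    (blockCentering blk)
  rwa [hsymm, blockCentering_mul_blockSize_mul_self hblk] at h

lemma det_one_add_smul_submatrix_blockCentering [Fintype ι] [DecidableEq ι] [Nonempty ι]
    [Fintype κ] (hblk : Function.Surjective blk) {a : ℝ} (ha : a ≠ 0) :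
    (1 + (a - 1) • (blockCentering blk).submatrix blk blk).det = a ^ (Fintype.card κ - 1) := by
  have hn : (Fintype.card ι : ℝ) ≠ 0 := Nat.cast_ne_zero.mpr Fintype.card_ne_zero
  have : Nonempty κ := ⟨blk (Classical.arbitrary ι)⟩
  have hfactor : 1 + ((a - 1) • blockCentering blk) * diagonal (blockSize blk)
      = a • (1 + replicateCol Unit (fun _ => -(a - 1) / (a * Fintype.card ι))
          * replicateRow Unit (blockSize blk)) := by
    rw [← vecMulVec_eq]
    ext k l
    by_cases hkl : k = l
    · subst hkl
      have hk := (blockSize_pos hblk k).ne'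
      simp only [blockCentering, Jmat, Matrix.add_apply, one_apply_eq, Matrix.smul_apply,
        mul_diagonal, Matrix.sub_apply, diagonal_apply_eq, Pi.inv_apply, of_apply, smul_eq_mul,
        mul_one, vecMulVec_apply]
      field_simp
      ring
    · simp only [blockCentering, Jmat, Matrix.add_apply, one_apply_ne hkl, Matrix.smul_apply,
        mul_diagonal, Matrix.sub_apply, diagonal_apply_ne _ hkl, of_apply, smul_eq_mul, mul_one,
        vecMulVec_apply]
      field_simp
      ring
  rw [show (a - 1) • (blockCentering blk).submatrix blk blk
      = ((a - 1) • blockCentering blk).submatrix blk blk from rfl, det_one_add_submatrix,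
    hfactor, det_smul, det_one_add_replicateCol_mul_replicateRow]
  simp only [dotProduct, ← Finset.sum_mul, sum_blockSize]
  rw [← pow_sub_one_mul Fintype.card_ne_zero]
  field_simp
  ring

variable (blk) in
def withinBlocks (w : ι → ι → ℝ) : ι → ι → ℝ := fun s t => if blk s = blk t then w s t else 0

lemma sum_erase_ite_sameBlock [Fintype ι] [DecidableEq ι] (s : ι) (a : ℝ) :
    ∑ u ∈ univ.erase s, (if blk s = blk u then a else 0) = (blockSize blk (blk s) - 1) * a := by
  rw [Finset.sum_erase_eq_sub (mem_univ s), if_pos rfl, Finset.sum_ite, Finset.sum_const_zero,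
    add_zero, Finset.sum_const, nsmul_eq_mul, blockSize, sub_mul, one_mul]
  simp only [eq_comm (a := blk s)]

lemma withinBlocks_symm {w : ι → ι → ℝ} (hw : ∀ s t, blk s = blk t → w s t = w t s) (s t : ι) :
    withinBlocks blk w s t = withinBlocks blk w t s := by
  by_cases h : blk s = blk t
  · simp [withinBlocks, h, hw s t h]
  · simp [withinBlocks, h, Ne.symm h]

lemma blockSize_le_card [Fintype ι] (k : κ) : blockSize blk k ≤ Fintype.card ι :=
  Nat.cast_le.mpr (Finset.card_le_univ _)

end Blocks

section BlockLaplacian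

variable {n : ℕ} {κ : Type*} [DecidableEq κ] {blk : Fin n → κ}

lemma lap_withinBlocks_mul_submatrix (w : Fin n → Fin n → ℝ) (X : Matrix κ κ ℝ) :
    lap (withinBlocks blk w) * X.submatrix blk blk = 0 := by
  ext s t
  have hrow := lap_mulVec_apply (withinBlocks blk w) (fun u => X (blk u) (blk t)) s
  rw [mulVec, dotProduct] at hrow
  rw [mul_apply, Matrix.zero_apply]
  refine hrow.trans (Finset.sum_eq_zero fun u _ => ?_)
  by_cases h : blk s = blk u <;> simp [withinBlocks, h]

lemma lap_sub_smul_submatrix_blockCentering [Fintype κ] (hblk : Function.Surjective blk) :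
    lap (1 - withinBlocks blk 1) - (n : ℝ) • (blockCentering blk).submatrix blk blk
      = lap (withinBlocks blk fun s _ => (n - blockSize blk (blk s)) / blockSize blk (blk s)) := by
  ext s t
  have hn : (n : ℝ) ≠ 0 := Nat.cast_ne_zero.mpr s.pos.ne'
  have hs := (blockSize_pos hblk (blk s)).ne'
  by_cases hst : s = t
  · subst hst
    simp only [lap, Matrix.sub_apply, of_apply, if_true, Pi.sub_apply, Pi.one_apply, withinBlocks,
      Finset.sum_sub_distrib, sum_erase_ite_sameBlock]
    simp only [Finset.sum_const, Finset.card_erase_of_mem (mem_univ s), card_univ,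
      Fintype.card_fin, nsmul_eq_mul, mul_one, blockCentering, Jmat, Matrix.smul_apply,
      submatrix_apply, Matrix.sub_apply, diagonal_apply_eq, Pi.inv_apply, of_apply, smul_eq_mul]
    rw [Nat.cast_pred s.pos]
    field_simp
    ring
  · by_cases hb : blk s = blk t
    · simp only [lap, withinBlocks, blockCentering, Jmat, Matrix.sub_apply, of_apply, hst,
        if_false, hb, if_true, Pi.sub_apply, Pi.one_apply, sub_self, Matrix.smul_apply,
        submatrix_apply, diagonal_apply_eq, Pi.inv_apply, smul_eq_mul, Fintype.card_fin]
      rw [hb] at hs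
      field_simp
      ring
    · simp [lap, hst, withinBlocks, hb, blockCentering, Jmat, hn]

lemma smul_submatrix_blockCentering_le_lap [Fintype κ] (hblk : Function.Surjective blk) :
    (n : ℝ) • (blockCentering blk).submatrix blk blk ≤ lap (1 - withinBlocks blk 1) := by
  rw [← sub_nonneg, lap_sub_smul_submatrix_blockCentering hblk]
  refine lap_nonneg (withinBlocks_symm fun s t h => by rw [h]) fun s t _ => ?_
  unfold withinBlocks
  split_ifs
  · have := blockSize_le_card (blk := blk) (blk s)
    rw [Fintype.card_fin] at this
    exact div_nonneg (sub_nonneg.mpr this) (blockSize_pos hblk _).le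
  · exact le_rfl

lemma lap_withinBlocks_add_smul_le_lap [Fintype κ] (hblk : Function.Surjective blk)
    {f : Fin n → Fin n → ℝ} {γ : ℝ} (hγ : 0 ≤ γ) (hsym : ∀ s t, f s t = f t s)
    (hge : ∀ s t, s ≠ t → γ ≤ f s t) :
    lap (withinBlocks blk f) + ((n : ℝ) * γ) • (blockCentering blk).submatrix blk blk ≤ lap f := by
  have hcross (w : Fin n → Fin n → ℝ) (hw : ∀ s t, w s t = w t s) :
      ∀ s t, (w - withinBlocks blk w) s t = (w - withinBlocks blk w) t s := fun s t => by
    simp only [Pi.sub_apply, hw s t, withinBlocks_symm (fun s t _ => hw s t) s t]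
  rw [← le_sub_iff_add_le']
  calc ((n : ℝ) * γ) • (blockCentering blk).submatrix blk blk
      = γ • ((n : ℝ) • (blockCentering blk).submatrix blk blk) := by rw [mul_comm, mul_smul]
    _ ≤ γ • lap (1 - withinBlocks blk 1) :=
        smul_le_smul_of_nonneg_left (smul_submatrix_blockCentering_le_lap hblk) hγ
    _ = lap (γ • (1 - withinBlocks blk 1)) := (lap_smul _ _).symm
    _ ≤ lap (f - withinBlocks blk f) := by
        refine lap_le_lap (hcross f hsym) (fun s t => ?_) fun s t hst => ?_
        · simp only [Pi.smul_apply, hcross 1 (fun _ _ => rfl) s t]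
        · by_cases h : blk s = blk t <;> simp [withinBlocks, h, hge s t hst]
    _ = lap f - lap (withinBlocks blk f) := lap_sub _ _

lemma lap_withinBlocks_add_smul_nonneg [Fintype κ] [Nonempty (Fin n)]
    (hblk : Function.Surjective blk) {f : Fin n → Fin n → ℝ} (hsym : ∀ s t, f s t = f t s)
    (hf : ∀ s t, s ≠ t → 0 ≤ f s t) {a : ℝ} (ha : 0 ≤ a) :
    0 ≤ lap (withinBlocks blk f) + (n : ℝ)⁻¹ • Jmat (Fin n)
      + a • (blockCentering blk).submatrix blk blk := by
  refine add_nonneg (add_nonneg ?_ (smul_nonneg (by positivity) (Jmat_nonneg _)))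
    (smul_nonneg ha (nonneg_iff_posSemidef.mpr ((posSemidef_blockCentering hblk).submatrix blk)))
  refine lap_nonneg (withinBlocks_symm fun s t _ => hsym s t) fun s t hst => ?_
  by_cases h : blk s = blk t <;> simp [withinBlocks, h, hf s t hst]

lemma det_lap_withinBlocks_add_submatrix [Fintype κ] [LinearOrder κ] (f : Fin n → Fin n → ℝ) :
    (lap (withinBlocks blk f) + (diagonal (blockSize blk)⁻¹).submatrix blk blk).det
      = ∏ k, (lapOn f {s | blk s = k} + ((#{s | blk s = k} : ℕ) : ℝ)⁻¹ • Jmat _).det := by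
  rw [BlockTriangular.det_fintype (b := blk) fun s t hlt => ?_]
  · refine Finset.prod_congr rfl fun k _ => ?_
    let e : {s // blk s = k} ≃ {s // s ∈ ({s | blk s = k} : Finset (Fin n))} :=
      Equiv.subtypeEquivRight fun s => by simp
    rw [← det_submatrix_equiv_self e]
    congr 1
    ext ⟨a, ha⟩ ⟨b, hb⟩
    subst ha
    by_cases hab : a = b
    · subst hab
      simp [toSquareBlock_def, lap, lapOn, withinBlocks, Jmat, e, blockSize, Finset.sum_filter,
        eq_comm]
    · simp [toSquareBlock_def, lap, lapOn, withinBlocks, Jmat, e, hab, hb, blockSize]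
  · have h : blk s ≠ blk t := hlt.ne'
    have hst : s ≠ t := fun e => h (congrArg blk e)
    simp [lap, withinBlocks, h, hst]

lemma lap_withinBlocks_add_mul [Fintype κ] (hblk : Function.Surjective blk)
    (w : Fin n → Fin n → ℝ) (a : ℝ) :
    (lap (withinBlocks blk w) + (diagonal (blockSize blk)⁻¹).submatrix blk blk)
        * (1 + (a - 1) • (blockCentering blk).submatrix blk blk)
      = lap (withinBlocks blk w) + (n : ℝ)⁻¹ • Jmat (Fin n)
          + a • (blockCentering blk).submatrix blk blk := by
  have hP : (diagonal (blockSize blk)⁻¹).submatrix blk blk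
      = (n : ℝ)⁻¹ • Jmat (Fin n) + (blockCentering blk).submatrix blk blk := by
    ext s t
    simp [blockCentering, Jmat]
  have hPR : (diagonal (blockSize blk)⁻¹).submatrix blk blk * (blockCentering blk).submatrix blk blk
      = (blockCentering blk).submatrix blk blk := by
    rw [submatrix_mul_submatrix, diagonal_mul_diagonal]
    simp_rw [Pi.inv_apply, inv_mul_cancel₀ (blockSize_pos hblk _).ne', diagonal_one,
      Matrix.one_mul]
  rw [Matrix.add_mul, Matrix.mul_add, Matrix.mul_add, Matrix.mul_one, Matrix.mul_one,
    Matrix.mul_smul, Matrix.mul_smul, lap_withinBlocks_mul_submatrix, hPR, hP, smul_zero]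
  module

end BlockLaplacian

theorem ratio_det_blocks_le_general {n K : ℕ} (hn : 0 < n)
    (γ : ℝ) (hγ : 0 < γ) (f : Fin n → Fin n → ℝ)
    (hsym : ∀ s t, f s t = f t s)
    (hge : ∀ s t : Fin n, s ≠ t → γ ≤ f s t)
    (V : Fin K → Finset (Fin n))
    (hdisj : ∀ k l, k ≠ l → Disjoint (V k) (V l))
    (hcover : ∀ i, ∃ k, i ∈ V k)
    (hne : ∀ k, (V k).Nonempty) :
    (∏ k, (lapOn f (V k) + (((V k).card : ℝ))⁻¹ • Jmat _).det) /
        (lap f + ((n : ℝ))⁻¹ • Jmat (Fin n)).det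
      ≤ (((n : ℝ) * γ) ^ (K - 1))⁻¹ := by
  obtain ⟨blk, rfl⟩ := exists_eq_filter_of_partition hdisj hcover
  have hblk : Function.Surjective blk := fun k => by
    obtain ⟨s, hs⟩ := hne k
    exact ⟨s, (Finset.mem_filter.mp hs).2⟩
  have : Nonempty (Fin n) := ⟨⟨0, hn⟩⟩
  have ha : 0 < (n : ℝ) * γ := by positivity
  set C := lap (withinBlocks blk f) + (n : ℝ)⁻¹ • Jmat (Fin n)
    + ((n : ℝ) * γ) • (blockCentering blk).submatrix blk blk with hCdef
  have hC : 0 ≤ C :=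
    lap_withinBlocks_add_smul_nonneg hblk hsym (fun s t hst => hγ.le.trans (hge s t hst)) ha.le
  have hCA : C ≤ lap f + (n : ℝ)⁻¹ • Jmat (Fin n) := by
    rw [hCdef, add_right_comm]
    gcongr
    exact lap_withinBlocks_add_smul_le_lap hblk hγ.le hsym hge
  have hdetC : C.det = ((n : ℝ) * γ) ^ (K - 1)
      * ∏ k, (lapOn f {s | blk s = k} + ((#{s | blk s = k} : ℕ) : ℝ)⁻¹ • Jmat _).det := by
    rw [hCdef, ← lap_withinBlocks_add_mul hblk, det_mul, det_lap_withinBlocks_add_submatrix,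
      det_one_add_smul_submatrix_blockCentering hblk ha.ne', Fintype.card_fin, mul_comm]
  have hmono := det_le_det hC hCA
  rw [hdetC] at hmono
  exact div_le_of_le_mul₀ (nonneg_iff_posSemidef.mp (hC.trans hCA)).det_nonneg (by positivity)
    ((le_inv_mul_iff₀ (by positivity)).mpr hmono)

/-- if all edge weights satisfy `f s t ≥ γ > 0`, then for any partition
`(V i)` of `[n]` into `K` blocks,
`(∏ i det (L_{V i} + n_i⁻¹ J)) / det (Lₙ + n⁻¹ J) ≤ (n γ)^{-(K-1)}`. -/
theorem ratio_det_blocks_le {n K : ℕ} (hn : 0 < n) (hK : 0 < K)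
    (γ : ℝ) (hγ : 0 < γ) (f : Fin n → Fin n → ℝ)
    (hsym : ∀ s t, f s t = f t s)
    (hge : ∀ s t : Fin n, s ≠ t → γ ≤ f s t)
    (V : Fin K → Finset (Fin n))
    (hdisj : ∀ k l, k ≠ l → Disjoint (V k) (V l))
    (hcover : ∀ i, ∃ k, i ∈ V k)
    (hne : ∀ k, (V k).Nonempty) :
    (∏ k, (lapOn f (V k) + (((V k).card : ℝ))⁻¹ • Jmat _).det) /
        (lap f + ((n : ℝ))⁻¹ • Jmat (Fin n)).det
      ≤ (((n : ℝ) * γ) ^ (K - 1))⁻¹ :=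
  ratio_det_blocks_le_general hn γ hγ f hsym hge V hdisj hcover hne
end

section
/- Let $A$ be the Laplacian on $[n]$ with edge weights $a_{st} = f_{st} 1\{s \sim t\} + \varepsilon 1\{s \not\sim t\}$ for a partition $(V_1,\ldots,V_K)$ of $[n]$ with $|V_i| = n_i$ and $\varepsilon > 0$. Then $A + \varepsilon J$ is block-diagonal up to permutation with blocks $L_{V_i} + (n - n_i)\varepsilon I + \varepsilon J_{n_i}$, and $\det(A + \varepsilon J) = (n\varepsilon)^K \prod_{i=1}^K \prod_{j=2}^{n_i} (\lambda_{ij} + (n - n_i)\varepsilon)$, where $\lambda_{ij}$ is the $j$-th smallest eigenvalue of $L_{V_i}$. -/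
open Matrix Finset

/-! Relabel the vertices block by block. Inside a block the off-block weights `ε` of `A`
contribute `(n - n_i) ε` to each diagonal entry, and between blocks they cancel against `ε J`,
so `A + ε J` is block diagonal. Each block is `L + c I + ε J` with `L` having zero row sums;
multiplying by `(c + ε m) I - ε J` turns it into `(c + ε m) (L + c I)`. Since
`det (L + c I) = c ∏_{j ≥ 2} (λ_j + c)` (as `λ_1 = 0`), comparing determinants gives
`det (L + c I + ε J) = (c + ε m) ∏_{j ≥ 2} (λ_j + c)` for generic `c`, and by continuity
for all `c`. -/

section Jmat

variable {ι : Type*} [Fintype ι]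

theorem Jmat_mul_Jmat : Jmat ι * Jmat ι = (Fintype.card ι : ℝ) • Jmat ι := by
  ext i j
  simp [Jmat, Matrix.mul_apply]

variable [DecidableEq ι]

theorem det_smul_one_add_smul_Jmat_mul (α β : ℝ) :
    (α • (1 : Matrix ι ι ℝ) + β • Jmat ι).det * α
      = α ^ Fintype.card ι * (α + β * Fintype.card ι) := by
  rcases eq_or_ne α 0 with rfl | hα
  · by_cases h : Fintype.card ι = 0 <;> simp [h]
  have hJ : (β / α) • Jmat ι
      = replicateCol Unit (fun _ => β / α) * replicateRow Unit (fun _ => (1 : ℝ)) := by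
    ext i j
    simp [Jmat, Matrix.mul_apply]
  have hfactor : α • (1 : Matrix ι ι ℝ) + β • Jmat ι = α • (1 + (β / α) • Jmat ι) := by
    rw [smul_add, smul_smul, mul_div_cancel₀ _ hα]
  rw [hfactor, det_smul, hJ, det_one_add_replicateCol_mul_replicateRow]
  simp only [dotProduct, sum_const, card_univ, nsmul_eq_mul]
  field_simp

theorem det_add_smul_one_add_smul_Jmat {L : Matrix ι ι ℝ} (hL : L * Jmat ι = 0)
    {p : ℝ → ℝ} (hp : Continuous p) (hdet : ∀ x, (L + x • (1 : Matrix ι ι ℝ)).det = x * p x)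
    (ε c : ℝ) :
    (L + c • (1 : Matrix ι ι ℝ) + ε • Jmat ι).det = (c + ε * Fintype.card ι) * p c := by
  set m : ℝ := (Fintype.card ι : ℝ)
  have hgeneric : ∀ x, x ≠ 0 → x + ε * m ≠ 0 →
      (L + x • (1 : Matrix ι ι ℝ) + ε • Jmat ι).det = (x + ε * m) * p x := by
    intro x hx hxm
    have hmul : (L + x • 1 + ε • Jmat ι) * ((x + ε * m) • (1 : Matrix ι ι ℝ) + (-ε) • Jmat ι)
        = (x + ε * m) • (L + x • (1 : Matrix ι ι ℝ)) := by
      simp only [Matrix.add_mul, Matrix.mul_add, Matrix.smul_mul, Matrix.mul_smul,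
        Matrix.mul_one, Matrix.one_mul, hL, Jmat_mul_Jmat, smul_smul]
      module
    have hdetmul := congrArg Matrix.det hmul
    rw [det_mul, det_smul, hdet] at hdetmul
    have hdetB := det_smul_one_add_smul_Jmat_mul (ι := ι) (x + ε * m) (-ε)
    apply mul_right_cancel₀ (mul_ne_zero (pow_ne_zero (Fintype.card ι) hxm) hx)
    linear_combination (x + ε * m) * hdetmul - (L + x • 1 + ε • Jmat ι).det * hdetB
  have hcont : Continuous fun x : ℝ => (L + x • (1 : Matrix ι ι ℝ) + ε • Jmat ι).det :=
    (by fun_prop : Continuous fun x : ℝ => L + x • (1 : Matrix ι ι ℝ) + ε • Jmat ι).matrix_det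
  have hdense : Dense ({0, -(ε * m)} : Set ℝ)ᶜ :=
    (Set.toFinite _).countable.dense_compl ℝ
  refine congrFun (hcont.ext_on (g := fun x => (x + ε * m) * p x) hdense (by fun_prop)
    fun x hx => ?_) c
  simp only [Set.mem_compl_iff, Set.mem_insert_iff, Set.mem_singleton_iff, not_or] at hx
  exact hgeneric x hx.1 fun h => hx.2 (by linarith)

end Jmat

theorem Matrix.det_add_smul_one_of_charpoly_roots {ι : Type*} [Fintype ι] [DecidableEq ι]
    {m : ℕ} (hm : Fintype.card ι = m) {L : Matrix ι ι ℝ} {lam : Fin m → ℝ}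
    (hroots : L.charpoly.roots = Multiset.map lam univ.val) (x : ℝ) :
    (L + x • (1 : Matrix ι ι ℝ)).det = ∏ j, (lam j + x) := by
  have hcard : Multiset.card L.charpoly.roots = L.charpoly.natDegree := by
    simp [hroots, charpoly_natDegree_eq_dim, hm]
  have hsplit := Polynomial.prod_multiset_X_sub_C_of_monic_of_roots_card_eq L.charpoly_monic hcard
  have heval := congrArg (Polynomial.eval (-x)) hsplit
  rw [eval_charpoly, Polynomial.eval_multiset_prod, hroots, Multiset.map_map,
    Multiset.map_map] at heval
  have hneg : scalar ι (-x) - L = -(L + x • (1 : Matrix ι ι ℝ)) := by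
    rw [scalar_apply, ← smul_one_eq_diagonal]; module
  rw [hneg, det_neg, hm] at heval
  have hprod : ∏ j, Polynomial.eval (-x) (Polynomial.X - Polynomial.C (lam j))
      = (-1) ^ m * ∏ j, (lam j + x) := by
    simp only [Polynomial.eval_sub, Polynomial.eval_X, Polynomial.eval_C, ← neg_add', prod_neg,
      card_univ, Fintype.card_fin, add_comm x]
  exact mul_left_cancel₀ (pow_ne_zero m (neg_ne_zero.2 one_ne_zero)) (hprod.symm.trans heval).symm

theorem det_add_smul_one_add_smul_Jmat_of_charpoly_roots {ι : Type*} [Fintype ι] [DecidableEq ι]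
    {m : ℕ} (hm : Fintype.card ι = m) {L : Matrix ι ι ℝ} (hL : L * Jmat ι = 0) {lam : Fin m → ℝ}
    (hroots : L.charpoly.roots = Multiset.map lam univ.val) {j₀ : Fin m} (hj₀ : lam j₀ = 0)
    (ε c : ℝ) :
    (L + c • (1 : Matrix ι ι ℝ) + ε • Jmat ι).det
      = (c + ε * m) * ∏ j ∈ univ.erase j₀, (lam j + c) := by
  rw [det_add_smul_one_add_smul_Jmat hL (p := fun x => ∏ j ∈ univ.erase j₀, (lam j + x))
    (by fun_prop) (fun x => ?_), hm]
  rw [det_add_smul_one_of_charpoly_roots hm hroots, ← mul_prod_erase univ _ (mem_univ j₀), hj₀,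
    zero_add]

theorem Matrix.det_blockDiagonal'_of_linearOrder {κ R : Type*} [Fintype κ] [DecidableEq κ]
    [LinearOrder κ] [CommRing R] {m : κ → Type*} [∀ k, Fintype (m k)] [∀ k, DecidableEq (m k)]
    (d : ∀ k, Matrix (m k) (m k) R) :
    (blockDiagonal' d).det = ∏ k, (d k).det := by
  rw [(blockTriangular_blockDiagonal' d).det_fintype]
  refine prod_congr rfl fun k _ => ?_
  let e : m k ≃ {a : Σ j, m j // a.fst = k} :=
    { toFun := fun x => ⟨⟨k, x⟩, rfl⟩
      invFun := fun a => cast (congrArg m a.2) a.1.2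
      left_inv := fun _ => rfl
      right_inv := by rintro ⟨⟨j, x⟩, rfl⟩; rfl }
  rw [← det_submatrix_equiv_self e]
  congr 1
  ext x y
  simp [toSquareBlock, toSquareBlockProp, e, blockDiagonal'_apply_eq]

theorem lapOn_mul_Jmat {n : ℕ} (f : Fin n → Fin n → ℝ) (S : Finset (Fin n)) :
    lapOn f S * Jmat S = 0 := by
  ext s t
  simp only [mul_apply, Jmat, lapOn, of_apply, mul_one, Matrix.zero_apply]
  rw [sum_coe_sort S fun u => if (s : Fin n) = u then ∑ w ∈ S.erase s, f s w else -f s u,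
    ← add_sum_erase S _ s.2, if_pos rfl,
    sum_congr rfl fun u hu => if_neg (ne_of_mem_erase hu).symm, sum_neg_distrib, add_neg_cancel]

theorem sum_erase_eq_of_forall_ne {n : ℕ} {f a : Fin n → Fin n → ℝ} {ε : ℝ} {S : Finset (Fin n)}
    {s : Fin n} (hs : s ∈ S) (h : ∀ t, t ≠ s → a s t = if t ∈ S then f s t else ε) :
    ∑ u ∈ univ.erase s, a s u = ∑ u ∈ S.erase s, f s u + ((n : ℝ) - #S) * ε := by
  have hin : ∑ u ∈ S.erase s, a s u = ∑ u ∈ S.erase s, f s u :=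
    sum_congr rfl fun u hu => by rw [h u (ne_of_mem_erase hu), if_pos (mem_of_mem_erase hu)]
  have hout : ∑ u ∈ Sᶜ, a s u = ((n : ℝ) - #S) * ε := by
    rw [sum_congr rfl fun u hu => by
        rw [h u (ne_of_mem_of_not_mem hs (mem_compl.1 hu)).symm, if_neg (mem_compl.1 hu)],
      sum_const, card_compl, Fintype.card_fin, nsmul_eq_mul,
      Nat.cast_sub ((card_le_univ S).trans_eq (Fintype.card_fin n))]
  linarith [sum_erase_add univ (a s) (mem_univ s), sum_add_sum_compl S (a s),
    sum_erase_add S (a s) hs]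

section Partition

variable {α κ : Type*} {V : κ → Finset α}

theorem eq_of_mem_of_mem_of_disjoint (hdisj : ∀ k l, k ≠ l → Disjoint (V k) (V l)) {i : α}
    {k l : κ} (hk : i ∈ V k) (hl : i ∈ V l) : k = l :=
  by_contra fun h => disjoint_left.mp (hdisj k l h) hk hl

noncomputable def sigmaEquivOfDisjointCover (hdisj : ∀ k l, k ≠ l → Disjoint (V k) (V l))
    (hcover : ∀ i, ∃ k, i ∈ V k) : (Σ k, V k) ≃ α where
  toFun p := p.2
  invFun i := ⟨(hcover i).choose, i, (hcover i).choose_spec⟩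
  left_inv := by
    rintro ⟨k, i, hi⟩
    obtain rfl := eq_of_mem_of_mem_of_disjoint hdisj (hcover i).choose_spec hi
    rfl
  right_inv _ := rfl

end Partition

theorem submatrix_lap_add_smul_Jmat {n K : ℕ} (ε : ℝ) (f : Fin n → Fin n → ℝ)
    {V : Fin K → Finset (Fin n)} (hdisj : ∀ k l, k ≠ l → Disjoint (V k) (V l))
    (hcover : ∀ i, ∃ k, i ∈ V k) {a : Fin n → Fin n → ℝ}
    (ha : ∀ s t : Fin n, s ≠ t →
      ((∃ k, s ∈ V k ∧ t ∈ V k) → a s t = f s t) ∧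
        ((¬ ∃ k, s ∈ V k ∧ t ∈ V k) → a s t = ε)) :
    (lap a + ε • Jmat (Fin n)).submatrix (sigmaEquivOfDisjointCover hdisj hcover)
        (sigmaEquivOfDisjointCover hdisj hcover) =
      blockDiagonal' fun k =>
        lapOn f (V k) + (((n : ℝ) - #(V k)) * ε) • (1 : Matrix _ _ ℝ) + ε • Jmat (V k) := by
  have hblock : ∀ k s t, s ∈ V k → t ≠ s → a s t = if t ∈ V k then f s t else ε := by
    intro k s t hs hts
    split_ifs with ht
    · exact (ha s t hts.symm).1 ⟨k, hs, ht⟩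
    · refine (ha s t hts.symm).2 fun ⟨l, hsl, htl⟩ => ht ?_
      rwa [eq_of_mem_of_mem_of_disjoint hdisj hs hsl]
  ext ⟨k, s⟩ ⟨l, t⟩
  change (lap a + ε • Jmat (Fin n)) s t = _
  rcases eq_or_ne k l with rfl | hkl
  · rw [blockDiagonal'_apply_eq]
    rcases eq_or_ne s t with rfl | hst
    · simp only [lap, lapOn, Jmat, Matrix.add_apply, Matrix.smul_apply, of_apply, one_apply_eq,
        ↓reduceIte, smul_eq_mul, mul_one]
      rw [sum_erase_eq_of_forall_ne s.2 (hblock k s · s.2)]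
    · have hst' : (s : Fin n) ≠ t := Subtype.coe_ne_coe.2 hst
      simp [lap, lapOn, Jmat, hst, hst', hblock k s t s.2 hst'.symm]
  · have hst : (s : Fin n) ≠ t := fun h => hkl (eq_of_mem_of_mem_of_disjoint hdisj s.2 (h ▸ t.2))
    have ht : (t : Fin n) ∉ V k := fun h => hkl (eq_of_mem_of_mem_of_disjoint hdisj h t.2)
    simp [blockDiagonal'_apply_ne _ _ _ hkl, lap, Jmat, hst, hblock k s t s.2 hst.symm, ht]

theorem det_modified_laplacian_add_eps_allOnes_general {n K : ℕ}
    (ε : ℝ) (f : Fin n → Fin n → ℝ)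
    (V : Fin K → Finset (Fin n))
    (hdisj : ∀ k l, k ≠ l → Disjoint (V k) (V l))
    (hcover : ∀ i, ∃ k, i ∈ V k)
    (hne : ∀ k, (V k).Nonempty)
    (a : Fin n → Fin n → ℝ)
    (ha : ∀ s t : Fin n, s ≠ t →
      ((∃ k, s ∈ V k ∧ t ∈ V k) → a s t = f s t) ∧
        ((¬ ∃ k, s ∈ V k ∧ t ∈ V k) → a s t = ε))
    (lam : (k : Fin K) → Fin (V k).card → ℝ)
    (hzero : ∀ (k : Fin K) (j : Fin (V k).card), (j : ℕ) = 0 → lam k j = 0)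
    (hroots : ∀ k,
      ((lapOn f (V k)).charpoly).roots = Multiset.map (lam k) Finset.univ.val) :
    (∃ e : ((k : Fin K) × {x : Fin n // x ∈ V k}) ≃ Fin n,
        (lap a + ε • Jmat (Fin n)).submatrix e e =
          Matrix.blockDiagonal' (fun k =>
            lapOn f (V k) + (((n : ℝ) - ((V k).card : ℝ)) * ε) • (1 : Matrix _ _ ℝ)
              + ε • Jmat {x : Fin n // x ∈ V k})) ∧
      (lap a + ε • Jmat (Fin n)).det =
        ((n : ℝ) * ε) ^ K *
          ∏ k, ∏ j ∈ Finset.univ.filter (fun j : Fin (V k).card => (j : ℕ) ≠ 0),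
            (lam k j + ((n : ℝ) - ((V k).card : ℝ)) * ε) := by
  have hblocks := submatrix_lap_add_smul_Jmat ε f hdisj hcover ha
  refine ⟨⟨_, hblocks⟩, ?_⟩
  rw [← det_submatrix_equiv_self (sigmaEquivOfDisjointCover hdisj hcover), hblocks,
    det_blockDiagonal'_of_linearOrder, ← Fin.prod_const, ← prod_mul_distrib]
  refine prod_congr rfl fun k _ => ?_
  have hpos : 0 < #(V k) := card_pos.2 (hne k)
  have hfilter : univ.filter (fun j : Fin #(V k) => (j : ℕ) ≠ 0) = univ.erase ⟨0, hpos⟩ := by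
    ext j
    simp [Fin.ext_iff]
  rw [det_add_smul_one_add_smul_Jmat_of_charpoly_roots (Fintype.card_coe _) (lapOn_mul_Jmat f _)
    (hroots k) (hzero k ⟨0, hpos⟩ rfl), hfilter]
  ring

/-- let `A` be the Laplacian with edge weights
`a s t = f s t` if `s ∼ t` (same block of the partition `(V k)`) and `= ε` otherwise.
Then `A + ε J` is block diagonal up to a relabeling of the vertices, with blocks
`L_{V k} + (n - n_k) ε I + ε J_{n_k}`, and
`det (A + ε J) = (n ε)^K ∏ k ∏_{j ≥ 2} (lam k j + (n - n_k) ε)`,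
where `lam k j` is the `j`-th smallest eigenvalue of `L_{V k}`. -/
theorem det_modified_laplacian_add_eps_allOnes {n K : ℕ} (hn : 0 < n) (hK : 0 < K)
    (ε : ℝ) (hε : 0 < ε) (f : Fin n → Fin n → ℝ)
    (hsym : ∀ s t, f s t = f t s) (hnn : ∀ s t, 0 ≤ f s t)
    (V : Fin K → Finset (Fin n))
    (hdisj : ∀ k l, k ≠ l → Disjoint (V k) (V l))
    (hcover : ∀ i, ∃ k, i ∈ V k)
    (hne : ∀ k, (V k).Nonempty)
    (a : Fin n → Fin n → ℝ)
    (ha : ∀ s t : Fin n, s ≠ t →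
      ((∃ k, s ∈ V k ∧ t ∈ V k) → a s t = f s t) ∧
        ((¬ ∃ k, s ∈ V k ∧ t ∈ V k) → a s t = ε))
    (lam : (k : Fin K) → Fin (V k).card → ℝ)
    (hmono : ∀ k, Monotone (lam k))
    (hzero : ∀ (k : Fin K) (j : Fin (V k).card), (j : ℕ) = 0 → lam k j = 0)
    (hroots : ∀ k,
      ((lapOn f (V k)).charpoly).roots = Multiset.map (lam k) Finset.univ.val) :
    (∃ e : ((k : Fin K) × {x : Fin n // x ∈ V k}) ≃ Fin n,
        (lap a + ε • Jmat (Fin n)).submatrix e e =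
          Matrix.blockDiagonal' (fun k =>
            lapOn f (V k) + (((n : ℝ) - ((V k).card : ℝ)) * ε) • (1 : Matrix _ _ ℝ)
              + ε • Jmat {x : Fin n // x ∈ V k})) ∧
      (lap a + ε • Jmat (Fin n)).det =
        ((n : ℝ) * ε) ^ K *
          ∏ k, ∏ j ∈ Finset.univ.filter (fun j : Fin (V k).card => (j : ℕ) ≠ 0),
            (lam k j + ((n : ℝ) - ((V k).card : ℝ)) * ε) :=
  det_modified_laplacian_add_eps_allOnes_general ε f V hdisj hcover hne a ha lam hzero hroots
end
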